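/- Let C = (c_{xy}) ∈ [-1,1]^{2×2} with θ_{xy} = arccos(c_{xy}) ∈ [0,π], and suppose max{|θ₁₁ − θ₁₂|, |θ₂₁ − θ₂₂|} ≤ min{θ₁₁ + θ₁₂, θ₂₁ + θ₂₂, 2π − (θ₁₁ + θ₁₂), 2π − (θ₂₁ + θ₂₂)}. Then: (a) for every PSD completion X ∈ E₄ of C (with X_{x,2+y} = c_{xy}), the angle θ₃₄ = arccos(X₃₄) lies in the interval [max{|θ₁₁ − θ₁₂|, |θ₂₁ − θ₂₂|}, min{θ₁₁ + θ₁₂, θ₂₁ + θ₂₂, 2π − (θ₁₁ + θ₁₂), 2π − (θ₂₁ + θ₂₂)}]; and (b) conversely, for every θ in this interval there exists a PSD completion X ∈ E₄ of C with arccos(X₃₄) = θ. -/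

import Mathlib

/-!
With `a = cos α` and `b = cos β` for `α, β ∈ [0, π]`, the determinant of the correlation matrix
`[[1, a, b], [a, 1, c], [b, c, 1]]` factors as `(cos (α - β) - c) * (c - cos (α + β))`, so it is
nonnegative exactly when `arccos c ∈ [|α - β|, min (α + β) (2π - (α + β))]`. A PSD completion `X`
has two such principal minors, on the indices `{x, 3, 4}`, which gives (a). Conversely, for `θ` in
the interval, `X` is the Gram matrix of `e₁`, `(cos θ, sin θ, 0)` and, for each `x`, a unit vector
whose inner products with these two are `c_{x1}` and `c_{x2}`; such a vector exists precisely
because the corresponding determinant is nonnegative.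
-/

open Matrix Real

/-- `X ∈ E₄` is a PSD completion of the `2 × 2` matrix `C`. -/
def IsPSDCompletion22 (X : Matrix (Fin 4) (Fin 4) ℝ)
    (C : Matrix (Fin 2) (Fin 2) ℝ) : Prop :=
  X.PosSemidef ∧ (∀ i, X i i = 1) ∧
  X 0 2 = C 0 0 ∧ X 0 3 = C 0 1 ∧ X 1 2 = C 1 0 ∧ X 1 3 = C 1 1

/-- The determinant of the correlation matrix `!![1, a, b; a, 1, c; b, c, 1]`. -/
def corrDet (a b c : ℝ) : ℝ := 1 - a ^ 2 - b ^ 2 - c ^ 2 + 2 * a * b * c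

theorem Matrix.PosSemidef.corrDet_nonneg {n : Type*} [Fintype n] [DecidableEq n]
    {X : Matrix n n ℝ} (hX : X.PosSemidef) {i j k : n}
    (hi : X i i = 1) (hj : X j j = 1) (hk : X k k = 1) :
    0 ≤ corrDet (X i j) (X i k) (X j k) := by
  have hdet := (hX.submatrix ![i, j, k]).det_nonneg
  have hsymm : ∀ p q, X q p = X p q := fun p q => by simpa using hX.1.apply p q
  rw [det_fin_three] at hdet
  simp only [submatrix_apply, cons_val_zero, cons_val_one, cons_val_two, head_cons,
    tail_cons, hi, hj, hk, hsymm i j, hsymm i k, hsymm j k] at hdet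
  unfold corrDet
  linarith

theorem corrDet_cos_cos_nonneg_iff {α β : ℝ} (hα : α ∈ Set.Icc 0 π) (hβ : β ∈ Set.Icc 0 π)
    (c : ℝ) : 0 ≤ corrDet (cos α) (cos β) c ↔ cos (α + β) ≤ c ∧ c ≤ cos (α - β) := by
  have hfactor : corrDet (cos α) (cos β) c = (cos (α - β) - c) * (c - cos (α + β)) := by
    rw [corrDet, cos_add, cos_sub]
    linear_combination (cos β ^ 2 - 1) * sin_sq_add_cos_sq α - sin α ^ 2 * sin_sq_add_cos_sq β
  have hle : cos (α + β) ≤ cos (α - β) := by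
    rw [cos_add, cos_sub]
    nlinarith [mul_nonneg (sin_nonneg_of_mem_Icc hα) (sin_nonneg_of_mem_Icc hβ)]
  rw [hfactor]
  constructor
  · intro h
    constructor <;> nlinarith
  · rintro ⟨hl, hu⟩
    exact mul_nonneg (sub_nonneg.2 hu) (sub_nonneg.2 hl)

theorem cos_add_le_cos_and_cos_le_cos_sub_iff {α β t : ℝ} (hα : α ∈ Set.Icc 0 π)
    (hβ : β ∈ Set.Icc 0 π) (ht : t ∈ Set.Icc 0 π) :
    (cos (α + β) ≤ cos t ∧ cos t ≤ cos (α - β)) ↔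
      |α - β| ≤ t ∧ t ≤ min (α + β) (2 * π - (α + β)) := by
  obtain ⟨hα0, hαπ⟩ := hα
  obtain ⟨hβ0, hβπ⟩ := hβ
  have hdiff : |α - β| ∈ Set.Icc 0 π := ⟨abs_nonneg _, abs_le.2 ⟨by linarith, by linarith⟩⟩
  have hsum : min (α + β) (2 * π - (α + β)) ∈ Set.Icc 0 π := by
    constructor
    · exact le_min (by linarith) (by linarith)
    · rcases le_total (α + β) π with h | h
      · exact (min_le_left _ _).trans h
      · exact (min_le_right _ _).trans (by linarith)
  have hcos_sum : cos (min (α + β) (2 * π - (α + β))) = cos (α + β) := by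
    rcases min_choice (α + β) (2 * π - (α + β)) with h | h <;> rw [h]
    rw [cos_two_pi_sub]
  rw [← cos_abs (α - β), ← hcos_sum, strictAntiOn_cos.le_iff_ge hsum ht,
    strictAntiOn_cos.le_iff_ge ht hdiff, and_comm]

theorem corrDet_cos_nonneg_iff {α β t : ℝ} (hα : α ∈ Set.Icc 0 π) (hβ : β ∈ Set.Icc 0 π)
    (ht : t ∈ Set.Icc 0 π) :
    0 ≤ corrDet (cos α) (cos β) (cos t) ↔
      |α - β| ≤ t ∧ t ≤ min (α + β) (2 * π - (α + β)) := by
  rw [corrDet_cos_cos_nonneg_iff hα hβ, cos_add_le_cos_and_cos_le_cos_sub_iff hα hβ ht]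

theorem arccos_mem_of_corrDet_nonneg {α β c : ℝ} (hα : α ∈ Set.Icc 0 π)
    (hβ : β ∈ Set.Icc 0 π) (hc : 0 ≤ corrDet (cos α) (cos β) c) :
    |α - β| ≤ arccos c ∧ arccos c ≤ min (α + β) (2 * π - (α + β)) := by
  obtain ⟨hl, hu⟩ := (corrDet_cos_cos_nonneg_iff hα hβ c).1 hc
  have hc1 : c ∈ Set.Icc (-1) 1 := ⟨(neg_one_le_cos _).trans hl, hu.trans (cos_le_one _)⟩
  rw [← cos_arccos hc1.1 hc1.2] at hc
  exact (corrDet_cos_nonneg_iff hα hβ ⟨arccos_nonneg c, arccos_le_pi c⟩).1 hc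

theorem exists_sq_add_sq_eq_and_mul_cos_add_mul_sin_eq {a b t : ℝ} (ha : a ^ 2 ≤ 1)
    (hdet : 0 ≤ corrDet a b (cos t)) :
    ∃ y z : ℝ, a ^ 2 + y ^ 2 + z ^ 2 = 1 ∧ a * cos t + y * sin t = b := by
  have hpyth := sin_sq_add_cos_sq t
  by_cases hs : sin t = 0
  · -- `cos t = ±1`, and then `corrDet a b (cos t) = -(b - a * cos t) ^ 2`
    have hb : b = a * cos t := by
      rw [hs] at hpyth
      unfold corrDet at hdet
      nlinarith [sq_nonneg (b - a * cos t)]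
    refine ⟨0, √(1 - a ^ 2), ?_, by rw [hb]; ring⟩
    rw [sq_sqrt (by linarith)]
    ring
  · set y := (b - a * cos t) / sin t
    have hy : y * sin t = b - a * cos t := div_mul_cancel₀ _ hs
    have hy2 : y ^ 2 * sin t ^ 2 ≤ (1 - a ^ 2) * sin t ^ 2 := by
      have hsq : y ^ 2 * sin t ^ 2 = (b - a * cos t) ^ 2 := by rw [← hy]; ring
      unfold corrDet at hdet
      nlinarith
    have hz : 0 ≤ 1 - a ^ 2 - y ^ 2 := by
      nlinarith [le_of_mul_le_mul_right hy2 (by positivity)]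
    refine ⟨y, √(1 - a ^ 2 - y ^ 2), ?_, by rw [hy]; ring⟩
    rw [sq_sqrt hz]
    ring

theorem IsPSDCompletion22.corrDet_nonneg {X : Matrix (Fin 4) (Fin 4) ℝ}
    {C : Matrix (Fin 2) (Fin 2) ℝ} (hX : IsPSDCompletion22 X C) (x : Fin 2) :
    0 ≤ corrDet (C x 0) (C x 1) (X 2 3) := by
  obtain ⟨hpsd, hdiag, h02, h03, h12, h13⟩ := hX
  fin_cases x
  · simpa [h02, h03] using hpsd.corrDet_nonneg (hdiag 0) (hdiag 2) (hdiag 3)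
  · simpa [h12, h13] using hpsd.corrDet_nonneg (hdiag 1) (hdiag 2) (hdiag 3)

theorem exists_isPSDCompletion22 {C : Matrix (Fin 2) (Fin 2) ℝ} {t : ℝ}
    (hC : ∀ x, C x 0 ^ 2 ≤ 1) (hdet : ∀ x, 0 ≤ corrDet (C x 0) (C x 1) (cos t)) :
    ∃ X, IsPSDCompletion22 X C ∧ X 2 3 = cos t := by
  choose y z hnorm hcorr using fun x =>
    exists_sq_add_sq_eq_and_mul_cos_add_mul_sin_eq (hC x) (hdet x)
  let B : Matrix (Fin 4) (Fin 3) ℝ :=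
    !![C 0 0, y 0, z 0; C 1 0, y 1, z 1; 1, 0, 0; cos t, sin t, 0]
  have hB : ∀ i j, (B * Bᴴ) i j = ∑ k, B i k * B j k := fun i j => by
    simp [mul_apply]
  refine ⟨B * Bᴴ, ⟨posSemidef_self_mul_conjTranspose B, fun i => ?_, ?_, ?_, ?_, ?_⟩, ?_⟩
  all_goals simp only [hB, Fin.sum_univ_three]
  · fin_cases i
    · simpa [B, ← sq] using hnorm 0
    · simpa [B, ← sq] using hnorm 1
    · simp [B]
    · simp [B, ← sq]
  · simp [B]
  · simpa [B] using hcorr 0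
  · simp [B]
  · simpa [B] using hcorr 1
  · simp [B]

theorem stmt14_general (C : Matrix (Fin 2) (Fin 2) ℝ)
    (hC : ∀ x y, C x y ∈ Set.Icc (-1 : ℝ) 1)
    (θ : Fin 2 → Fin 2 → ℝ) (hθ : ∀ x y, θ x y = Real.arccos (C x y)) :
    (∀ X, IsPSDCompletion22 X C →
       max |θ 0 0 - θ 0 1| |θ 1 0 - θ 1 1| ≤ Real.arccos (X 2 3) ∧
       Real.arccos (X 2 3) ≤
         min (min (θ 0 0 + θ 0 1) (θ 1 0 + θ 1 1))
             (min (2 * π - (θ 0 0 + θ 0 1)) (2 * π - (θ 1 0 + θ 1 1)))) ∧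
    (∀ t : ℝ, max |θ 0 0 - θ 0 1| |θ 1 0 - θ 1 1| ≤ t →
       t ≤ min (min (θ 0 0 + θ 0 1) (θ 1 0 + θ 1 1))
             (min (2 * π - (θ 0 0 + θ 0 1)) (2 * π - (θ 1 0 + θ 1 1))) →
       ∃ X, IsPSDCompletion22 X C ∧ Real.arccos (X 2 3) = t) := by
  have hθI x y : θ x y ∈ Set.Icc 0 π := hθ x y ▸ ⟨arccos_nonneg _, arccos_le_pi _⟩
  have hcos x y : cos (θ x y) = C x y := by rw [hθ, cos_arccos (hC x y).1 (hC x y).2]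
  rw [min_min_min_comm]
  refine ⟨fun X hX => ?_, fun t hlow hup => ?_⟩
  · have hrow x := arccos_mem_of_corrDet_nonneg (hθI x 0) (hθI x 1)
      (by rw [hcos, hcos]; exact hX.corrDet_nonneg x)
    exact ⟨max_le (hrow 0).1 (hrow 1).1, le_min (hrow 0).2 (hrow 1).2⟩
  · have hrow : ∀ x, |θ x 0 - θ x 1| ≤ t ∧ t ≤ min (θ x 0 + θ x 1) (2 * π - (θ x 0 + θ x 1)) := by
      intro x
      fin_cases x
      exacts [⟨(le_max_left _ _).trans hlow, hup.trans (min_le_left _ _)⟩,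
        ⟨(le_max_right _ _).trans hlow, hup.trans (min_le_right _ _)⟩]
    have ht : t ∈ Set.Icc 0 π := by
      obtain ⟨hl, hu⟩ := hrow 0
      rw [le_min_iff] at hu
      exact ⟨(abs_nonneg _).trans hl, by linarith⟩
    have hdet x : 0 ≤ corrDet (C x 0) (C x 1) (cos t) := by
      rw [← hcos, ← hcos]
      exact (corrDet_cos_nonneg_iff (hθI x 0) (hθI x 1) ht).2 (hrow x)
    have hC₀ x : C x 0 ^ 2 ≤ 1 := (sq_le_one_iff_abs_le_one _).2 (abs_le.2 (hC x 0))
    obtain ⟨X, hX, hX23⟩ := exists_isPSDCompletion22 hC₀ hdet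
    exact ⟨X, hX, by rw [hX23, arccos_cos ht.1 ht.2]⟩

theorem stmt14 (C : Matrix (Fin 2) (Fin 2) ℝ)
    (hC : ∀ x y, C x y ∈ Set.Icc (-1 : ℝ) 1)
    (θ : Fin 2 → Fin 2 → ℝ) (hθ : ∀ x y, θ x y = Real.arccos (C x y))
    (hint : max |θ 0 0 - θ 0 1| |θ 1 0 - θ 1 1| ≤
      min (min (θ 0 0 + θ 0 1) (θ 1 0 + θ 1 1))
          (min (2 * π - (θ 0 0 + θ 0 1)) (2 * π - (θ 1 0 + θ 1 1)))) :
    (∀ X, IsPSDCompletion22 X C →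
       max |θ 0 0 - θ 0 1| |θ 1 0 - θ 1 1| ≤ Real.arccos (X 2 3) ∧
       Real.arccos (X 2 3) ≤
         min (min (θ 0 0 + θ 0 1) (θ 1 0 + θ 1 1))
             (min (2 * π - (θ 0 0 + θ 0 1)) (2 * π - (θ 1 0 + θ 1 1)))) ∧
    (∀ t : ℝ, max |θ 0 0 - θ 0 1| |θ 1 0 - θ 1 1| ≤ t →
       t ≤ min (min (θ 0 0 + θ 0 1) (θ 1 0 + θ 1 1))
             (min (2 * π - (θ 0 0 + θ 0 1)) (2 * π - (θ 1 0 + θ 1 1))) →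
       ∃ X, IsPSDCompletion22 X C ∧ Real.arccos (X 2 3) = t) :=
  stmt14_general C hC θ hθ
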